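/- arXiv:1001.0330 — 4 statements merged into one kernel-verified Lean document; each statement's English description precedes it below -/
import Mathlib

section
/- There exists a constant c > 0 such that for every finite simple graph G with at least one edge, re(G) ≥ c·√(Δ(G)), where Δ(G) is the maximum vertex degree of G. -/
/-!
Let `u` be a vertex of maximum degree `Δ`, let `s` be the least distance between images of
distinct vertices and `R` the greatest edge length, so `s ≤ R`. The open balls of radius `s / 2`
around the `Δ` neighbours of `u` are disjoint and lie in the ball of radius `R + s / 2 ≤ 3R / 2`
around `u`, so comparing areas gives `Δ s² ≤ 9 R²`, i.e. `R / s ≥ √Δ / 3`.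
-/

open Real

noncomputable section

/-- The Euclidean plane. -/
abbrev Pt := EuclideanSpace ℝ (Fin 2)

variable {V : Type*} [Fintype V]

/-- A representation is non-edge-degenerate if endpoints of every edge are mapped
to distinct points. -/
def NED (G : SimpleGraph V) (ρ : V → Pt) : Prop := ∀ ⦃u v⦄, G.Adj u v → ρ u ≠ ρ v

/-- Maximum edge length of a representation. -/
def maxE (G : SimpleGraph V) (ρ : V → Pt) : ℝ :=
  sSup {d | ∃ u v, G.Adj u v ∧ d = dist (ρ u) (ρ v)}

/-- Minimum edge length of a representation. -/
def minE (G : SimpleGraph V) (ρ : V → Pt) : ℝ :=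
  sInf {d | ∃ u v, G.Adj u v ∧ d = dist (ρ u) (ρ v)}

/-- Maximum distance between images of two distinct vertices. -/
def maxP (ρ : V → Pt) : ℝ := sSup {d | ∃ u v : V, u ≠ v ∧ d = dist (ρ u) (ρ v)}

/-- Minimum distance between images of two distinct vertices. -/
def minP (ρ : V → Pt) : ℝ := sInf {d | ∃ u v : V, u ≠ v ∧ d = dist (ρ u) (ρ v)}

/-- The dilation coefficient of a graph. -/
def dc (G : SimpleGraph V) : ℝ :=
  sInf {r | ∃ ρ : V → Pt, NED G ρ ∧ r = maxE G ρ / minE G ρ}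

/-- The plane-width of a graph. -/
def pw (G : SimpleGraph V) : ℝ :=
  sInf {r | ∃ ρ : V → Pt, NED G ρ ∧ r = maxP ρ / minE G ρ}

/-- The resolution coefficient of a graph. -/
def re (G : SimpleGraph V) : ℝ :=
  sInf {r | ∃ ρ : V → Pt, Function.Injective ρ ∧ r = maxE G ρ / minP ρ}

open Module MeasureTheory Metric

theorem card_mul_pow_le_of_separated {E ι : Type*} [NormedAddCommGroup E] [NormedSpace ℝ E]
    [FiniteDimensional ℝ E] (t : Finset ι) (p : ι → E) (x : E) {s R : ℝ} (hs : 0 < s)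
    (hR : 0 ≤ R) (hsep : ∀ a ∈ t, ∀ b ∈ t, a ≠ b → s ≤ dist (p a) (p b))
    (hx : ∀ a ∈ t, dist (p a) x ≤ R) :
    t.card * (s / 2) ^ finrank ℝ E ≤ (R + s / 2) ^ finrank ℝ E := by
  borelize E
  set μ : Measure E := Measure.addHaar
  have hdisj : (t : Set ι).PairwiseDisjoint fun a => ball (p a) (s / 2) :=
    fun a ha b hb hab => ball_disjoint_ball (by linarith [hsep a ha b hb hab])
  have hsub : (⋃ a ∈ t, ball (p a) (s / 2)) ⊆ ball x (R + s / 2) := by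
    simp only [Set.iUnion_subset_iff]
    intro a ha y hy
    rw [mem_ball] at hy ⊢
    linarith [dist_triangle y (p a) x, hx a ha]
  have hvol : t.card * ENNReal.ofReal ((s / 2) ^ finrank ℝ E) * μ (ball 0 1)
      ≤ ENNReal.ofReal ((R + s / 2) ^ finrank ℝ E) * μ (ball 0 1) := by
    calc t.card * ENNReal.ofReal ((s / 2) ^ finrank ℝ E) * μ (ball 0 1)
        = ∑ a ∈ t, μ (ball (p a) (s / 2)) := by
          simp only [μ.addHaar_ball_of_pos _ (half_pos hs), Finset.sum_const, nsmul_eq_mul,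
            mul_assoc]
      _ = μ (⋃ a ∈ t, ball (p a) (s / 2)) :=
          (measure_biUnion_finset hdisj fun _ _ => measurableSet_ball).symm
      _ ≤ μ (ball x (R + s / 2)) := measure_mono hsub
      _ = _ := μ.addHaar_ball_of_pos _ (by positivity)
  have hvol' := (ENNReal.mul_le_mul_iff_left (measure_ball_pos μ 0 one_pos).ne'
    measure_ball_lt_top.ne).mp hvol
  rwa [← ENNReal.ofReal_natCast, ← ENNReal.ofReal_mul (by positivity),
    ENNReal.ofReal_le_ofReal_iff (by positivity)] at hvol'

section

variable {G : SimpleGraph V} {ρ : V → Pt}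

theorem dist_le_maxE {u v : V} (h : G.Adj u v) : dist (ρ u) (ρ v) ≤ maxE G ρ :=
  le_csSup ((Set.finite_range fun p : V × V => dist (ρ p.1) (ρ p.2)).subset
    (by rintro _ ⟨u, v, -, rfl⟩; exact ⟨(u, v), rfl⟩)).bddAbove ⟨u, v, h, rfl⟩

omit [Fintype V] in
theorem minP_le_dist {u v : V} (h : u ≠ v) : minP ρ ≤ dist (ρ u) (ρ v) :=
  csInf_le ⟨0, by rintro _ ⟨-, -, -, rfl⟩; exact dist_nonneg⟩ ⟨u, v, h, rfl⟩

theorem minP_pos [Nontrivial V] (hρ : Function.Injective ρ) : 0 < minP ρ := by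
  obtain ⟨u₀, v₀, huv₀⟩ := exists_pair_ne V
  have hne : {d | ∃ u v : V, u ≠ v ∧ d = dist (ρ u) (ρ v)}.Nonempty := ⟨_, u₀, v₀, huv₀, rfl⟩
  have hfin : {d | ∃ u v : V, u ≠ v ∧ d = dist (ρ u) (ρ v)}.Finite :=
    (Set.finite_range fun p : V × V => dist (ρ p.1) (ρ p.2)).subset
      (by rintro _ ⟨u, v, -, rfl⟩; exact ⟨(u, v), rfl⟩)
  obtain ⟨u, v, huv, hmin⟩ := hne.csInf_mem hfin
  rw [minP, hmin]
  exact dist_pos.mpr (hρ.ne huv)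

theorem sqrt_maxDegree_mul_minP_le [DecidableRel G.Adj] (hρ : Function.Injective ρ) {u₀ v₀ : V}
    (huv₀ : G.Adj u₀ v₀) : √G.maxDegree * minP ρ ≤ 3 * maxE G ρ := by
  have := huv₀.nontrivial
  set s := minP ρ
  set R := maxE G ρ
  have hs : 0 < s := minP_pos hρ
  have hsR : s ≤ R := (minP_le_dist huv₀.ne).trans (dist_le_maxE huv₀)
  obtain ⟨u, hu⟩ := G.exists_maximal_degree_vertex
  have hpack := card_mul_pow_le_of_separated (G.neighborFinset u) ρ (ρ u) hs (hs.le.trans hsR)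
    (fun a _ b _ hab => minP_le_dist hab)
    (fun a ha => by
      rw [dist_comm]
      exact dist_le_maxE ((G.mem_neighborFinset u a).mp ha))
  rw [finrank_euclideanSpace_fin, G.card_neighborFinset_eq_degree, ← hu] at hpack
  have hsq : (G.maxDegree : ℝ) * s ^ 2 ≤ (3 * R) ^ 2 := by nlinarith
  calc √G.maxDegree * s = √((G.maxDegree : ℝ) * s ^ 2) := by
        rw [sqrt_mul (Nat.cast_nonneg _), sqrt_sq hs.le]
    _ ≤ √((3 * R) ^ 2) := sqrt_le_sqrt hsq
    _ = 3 * R := sqrt_sq (by linarith)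

theorem exists_injective_pt : ∃ ρ : V → Pt, Function.Injective ρ :=
  ⟨_, ((Fintype.equivFin V).toEmbedding.trans
    (Fin.valEmbedding.trans (Infinite.natEmbedding Pt))).injective⟩

end

/-- There is a constant `c > 0` such that every finite simple graph with at least
one edge satisfies `re G ≥ c·√(Δ(G))`. -/
theorem stmt_6 : ∃ c : ℝ, 0 < c ∧
    ∀ (V : Type) [Fintype V] (G : SimpleGraph V) [DecidableRel G.Adj],
      G.edgeSet.Nonempty → c * Real.sqrt (G.maxDegree) ≤ re G := by
  refine ⟨1 / 3, by norm_num, fun V _ G _ hE => ?_⟩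
  obtain ⟨⟨u, v⟩, huv⟩ := hE
  rw [SimpleGraph.mem_edgeSet] at huv
  have := huv.nontrivial
  obtain ⟨ρ₀, hρ₀⟩ := exists_injective_pt (V := V)
  refine le_csInf ⟨_, ρ₀, hρ₀, rfl⟩ ?_
  rintro _ ⟨ρ, hρ, rfl⟩
  rw [le_div_iff₀ (minP_pos hρ)]
  linarith [sqrt_maxDegree_mul_minP_le hρ huv]
end
end

section
/- For every finite simple graph G with at least one edge, the one-dimensional plane-width (line-width) satisfies pw₁(G) = χ(G) − 1, where χ(G) is the chromatic number. -/
open Real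

noncomputable section

variable {V : Type*} [Fintype V]

/-- One-dimensional non-edge-degeneracy. -/
def NED1 (G : SimpleGraph V) (ρ : V → ℝ) : Prop := ∀ ⦃u v⦄, G.Adj u v → ρ u ≠ ρ v

def maxE1 (G : SimpleGraph V) (ρ : V → ℝ) : ℝ :=
  sSup {d | ∃ u v, G.Adj u v ∧ d = |ρ u - ρ v|}

def minE1 (G : SimpleGraph V) (ρ : V → ℝ) : ℝ :=
  sInf {d | ∃ u v, G.Adj u v ∧ d = |ρ u - ρ v|}

def maxP1 (ρ : V → ℝ) : ℝ := sSup {d | ∃ u v : V, u ≠ v ∧ d = |ρ u - ρ v|}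

def minP1 (ρ : V → ℝ) : ℝ := sInf {d | ∃ u v : V, u ≠ v ∧ d = |ρ u - ρ v|}

/-- The one-dimensional dilation coefficient. -/
def dc1 (G : SimpleGraph V) : ℝ :=
  sInf {r | ∃ ρ : V → ℝ, NED1 G ρ ∧ r = maxE1 G ρ / minE1 G ρ}

/-- The one-dimensional plane-width ("line-width"). -/
def pw1 (G : SimpleGraph V) : ℝ :=
  sInf {r | ∃ ρ : V → ℝ, NED1 G ρ ∧ r = maxP1 ρ / minE1 G ρ}

/-- The one-dimensional resolution coefficient. -/
def re1 (G : SimpleGraph V) : ℝ :=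
  sInf {r | ∃ ρ : V → ℝ, Function.Injective ρ ∧ r = maxE1 G ρ / minP1 ρ}

/-!
If adjacent vertices lie at distance at least `m` on the line, cutting the line into half-open
intervals of length `m` starting at `min ρ` colours `G` properly by `v ↦ ⌊(ρ v - min ρ) / m⌋`,
with at most `⌊(max ρ - min ρ) / m⌋ + 1` colours; hence `χ(G) - 1 ≤ maxP1 ρ / minE1 G ρ`.
Conversely, an optimal colouring with colours `0, …, χ(G) - 1`, read as points of `ℝ`, has all
edge lengths at least `1` and all distances at most `χ(G) - 1`.
-/

namespace SimpleGraph

variable {α : Type*} {G : SimpleGraph α}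

theorem colorable_floor_div_add_one {f : α → ℝ} {a b m : ℝ} (hm : 0 < m)
    (hf : ∀ v, f v ∈ Set.Icc a b) (hadj : ∀ ⦃u v⦄, G.Adj u v → m ≤ |f u - f v|) :
    G.Colorable (⌊(b - a) / m⌋₊ + 1) := by
  set c : α → ℕ := fun v => ⌊(f v - a) / m⌋₊
  have hc_lt : ∀ ⦃u v⦄, f u + m ≤ f v → c u < c v := by
    intro u v huv
    have h : (f u - a) / m + 1 ≤ (f v - a) / m := by
      rw [div_add_one hm.ne']
      gcongr
      linarith
    calc c u < c u + 1 := Nat.lt_succ_self _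
      _ = ⌊(f u - a) / m + 1⌋₊ :=
        (Nat.floor_add_one (div_nonneg (sub_nonneg.2 (hf u).1) hm.le)).symm
      _ ≤ c v := Nat.floor_le_floor h
  refine (colorable_iff_exists_bdd_nat_coloring _).2
    ⟨Coloring.mk c fun {u v} h => ?_, fun v => Nat.lt_succ_of_le ?_⟩
  · rcases le_abs'.1 (hadj h) with h' | h'
    · exact (hc_lt (by linarith)).ne
    · exact (hc_lt (by linarith)).ne'
  · exact Nat.floor_le_floor (show (f v - a) / m ≤ (b - a) / m by gcongr; exact (hf v).2)

theorem chromaticNumber_toNat_sub_one_le_div {f : α → ℝ} {a b m : ℝ} (hm : 0 < m) (hab : a ≤ b)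
    (hf : ∀ v, f v ∈ Set.Icc a b) (hadj : ∀ ⦃u v⦄, G.Adj u v → m ≤ |f u - f v|) :
    (G.chromaticNumber.toNat : ℝ) - 1 ≤ (b - a) / m := by
  have hk : G.chromaticNumber.toNat ≤ ⌊(b - a) / m⌋₊ + 1 :=
    ENat.toNat_le_of_le_natCast (colorable_floor_div_add_one hm hf hadj).chromaticNumber_le
  calc (G.chromaticNumber.toNat : ℝ) - 1 ≤ ⌊(b - a) / m⌋₊ := by
        rw [sub_le_iff_le_add]
        exact_mod_cast hk
    _ ≤ (b - a) / m := Nat.floor_le (div_nonneg (sub_nonneg.2 hab) hm.le)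

end SimpleGraph

section LineRepresentation

variable {α : Type*} {G : SimpleGraph α}

lemma finite_setOf_abs_sub [Finite α] (ρ : α → ℝ) (p : α → α → Prop) :
    {d | ∃ u v, p u v ∧ d = |ρ u - ρ v|}.Finite :=
  (Set.finite_range fun x : α × α => |ρ x.1 - ρ x.2|).subset <| by
    rintro _ ⟨u, v, -, rfl⟩
    exact ⟨(u, v), rfl⟩

lemma exists_adj_of_edgeSet_nonempty (hG : G.edgeSet.Nonempty) : ∃ u v, G.Adj u v := by
  obtain ⟨⟨u, v⟩, h⟩ := hG
  exact ⟨u, v, h⟩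

lemma minE1_le_abs_sub [Finite α] (ρ : α → ℝ) {u v : α} (h : G.Adj u v) :
    minE1 G ρ ≤ |ρ u - ρ v| :=
  csInf_le (finite_setOf_abs_sub ρ G.Adj).bddBelow ⟨u, v, h, rfl⟩

lemma le_minE1 (hG : G.edgeSet.Nonempty) {ρ : α → ℝ} {m : ℝ}
    (h : ∀ ⦃u v⦄, G.Adj u v → m ≤ |ρ u - ρ v|) : m ≤ minE1 G ρ := by
  obtain ⟨u, v, huv⟩ := exists_adj_of_edgeSet_nonempty hG
  refine le_csInf ⟨_, u, v, huv, rfl⟩ ?_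
  rintro _ ⟨u, v, huv, rfl⟩
  exact h huv

lemma minE1_pos [Finite α] (hG : G.edgeSet.Nonempty) {ρ : α → ℝ} (hρ : NED1 G ρ) :
    0 < minE1 G ρ := by
  obtain ⟨u₀, v₀, h₀⟩ := exists_adj_of_edgeSet_nonempty hG
  obtain ⟨u, v, huv, hmin⟩ : minE1 G ρ ∈ {d | ∃ u v, G.Adj u v ∧ d = |ρ u - ρ v|} :=
    Set.Nonempty.csInf_mem ⟨_, u₀, v₀, h₀, rfl⟩ (finite_setOf_abs_sub ρ G.Adj)
  rw [hmin]
  exact abs_pos.2 (sub_ne_zero.2 (hρ huv))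

lemma maxP1_nonneg (ρ : α → ℝ) : 0 ≤ maxP1 ρ :=
  Real.sSup_nonneg <| by
    rintro _ ⟨u, v, -, rfl⟩
    exact abs_nonneg _

lemma sub_le_maxP1 [Finite α] (ρ : α → ℝ) (u v : α) : ρ u - ρ v ≤ maxP1 ρ := by
  rcases eq_or_ne u v with rfl | h
  · rw [sub_self]
    exact maxP1_nonneg ρ
  · exact (le_abs_self _).trans <|
      le_csSup (finite_setOf_abs_sub ρ (· ≠ ·)).bddAbove ⟨u, v, h, rfl⟩

lemma maxP1_le {ρ : α → ℝ} {M : ℝ} (hM : 0 ≤ M) (h : ∀ u v, |ρ u - ρ v| ≤ M) : maxP1 ρ ≤ M :=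
  Real.sSup_le (by rintro _ ⟨u, v, -, rfl⟩; exact h u v) hM

theorem chromaticNumber_toNat_sub_one_le_maxP1_div_minE1 [Finite α] (hG : G.edgeSet.Nonempty)
    {ρ : α → ℝ} (hρ : NED1 G ρ) :
    (G.chromaticNumber.toNat : ℝ) - 1 ≤ maxP1 ρ / minE1 G ρ := by
  obtain ⟨u, -, -⟩ := exists_adj_of_edgeSet_nonempty hG
  have : Nonempty α := ⟨u⟩
  obtain ⟨w, hw⟩ := Finite.exists_min ρ
  obtain ⟨z, hz⟩ := Finite.exists_max ρ
  have hm := minE1_pos hG hρ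
  calc (G.chromaticNumber.toNat : ℝ) - 1 ≤ (ρ z - ρ w) / minE1 G ρ :=
        G.chromaticNumber_toNat_sub_one_le_div hm (hw z) (fun v => ⟨hw v, hz v⟩)
          fun _ _ h => minE1_le_abs_sub ρ h
    _ ≤ maxP1 ρ / minE1 G ρ := by
        gcongr
        exact sub_le_maxP1 ρ z w

theorem NED1.of_coloring {n : ℕ} (C : G.Coloring (Fin n)) : NED1 G fun v => ((C v : ℕ) : ℝ) :=
  fun _ _ h he => C.valid h (Fin.ext (Nat.cast_injective he))

theorem maxP1_div_minE1_le_of_coloring (hG : G.edgeSet.Nonempty) {n : ℕ}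
    (C : G.Coloring (Fin n)) :
    maxP1 (fun v => ((C v : ℕ) : ℝ)) / minE1 G (fun v => ((C v : ℕ) : ℝ)) ≤ n - 1 := by
  have hC : ∀ v, ((C v : ℕ) : ℝ) ≤ n - 1 := fun v => by
    rw [le_sub_iff_add_le]
    exact_mod_cast (C v).isLt
  have hmin : 1 ≤ minE1 G fun v => ((C v : ℕ) : ℝ) := le_minE1 hG fun u v h => by
    have hne : ((C u : ℕ) : ℤ) ≠ (C v : ℕ) := by exact_mod_cast Fin.val_ne_of_ne (C.valid h)
    exact_mod_cast Int.one_le_abs (sub_ne_zero.2 hne)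
  obtain ⟨u₀, -, -⟩ := exists_adj_of_edgeSet_nonempty hG
  have hmax : maxP1 (fun v => ((C v : ℕ) : ℝ)) ≤ n - 1 :=
    maxP1_le ((Nat.cast_nonneg _).trans (hC u₀)) fun u v =>
      abs_sub_le_of_nonneg_of_le (Nat.cast_nonneg _) (hC u) (Nat.cast_nonneg _) (hC v)
  exact (div_le_self (maxP1_nonneg _) hmin).trans hmax

end LineRepresentation

/-- The one-dimensional plane-width equals the chromatic number minus one. -/
theorem stmt_9 {V : Type*} [Fintype V] (G : SimpleGraph V) (hG : G.edgeSet.Nonempty) :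
    pw1 G = (G.chromaticNumber.toNat : ℝ) - 1 := by
  have hlower : ∀ r ∈ {r | ∃ ρ : V → ℝ, NED1 G ρ ∧ r = maxP1 ρ / minE1 G ρ},
      (G.chromaticNumber.toNat : ℝ) - 1 ≤ r := by
    rintro _ ⟨ρ, hρ, rfl⟩
    exact chromaticNumber_toNat_sub_one_le_maxP1_div_minE1 hG hρ
  obtain ⟨C⟩ := G.colorable_chromaticNumber_of_fintype
  exact le_antisymm
    (csInf_le_of_le ⟨_, hlower⟩ ⟨_, NED1.of_coloring C, rfl⟩
      (maxP1_div_minE1_le_of_coloring hG C))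
    (le_csInf ⟨_, _, NED1.of_coloring C, rfl⟩ hlower)
end
end

section
/- The bandwidth of the Cartesian product of two paths satisfies bw(P_m □ P_n) ≥ min{m,n}, while the resolution coefficient of P_m □ P_n equals 1 (witnessed by the integer grid placement); hence the resolution coefficient is not bounded below by any increasing unbounded function of the bandwidth. -/
/-!
Bandwidth: given an injective labelling `ψ` of `P_m □ P_n` whose values differ by at most `k`
along edges, let `s` be the largest threshold such that every row and every column contains a
label `≥ s`. Some row (or column) then has all its labels `≤ s`. Every column contains a vertex
with label `≥ s` adjacent to one with label `< s`: walk along the column from that row, or, if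
the row's own label is `s`, take its neighbour in the row. These `n` vertices have distinct
labels in `[s, s + k)`, so `n ≤ k`.

Resolution: in the integer grid placement edges have length `1` and distinct vertices are at
distance `≥ 1`, whereas in any injective placement an edge is a pair of distinct vertices, so
the ratio is at least `1`.
-/

open Real

noncomputable section

variable {V : Type*} [Fintype V]

/-- The bandwidth of a graph: minimum over bijections `φ : V ≃ {1,…,n}` of the
maximum of `|φ u - φ v|` over edges `uv`. -/
def bw (G : SimpleGraph V) : ℕ :=
  sInf {k : ℕ | ∃ φ : V ≃ Fin (Fintype.card V),
    ∀ u v, G.Adj u v → (((φ u : ℕ) : ℤ) - ((φ v : ℕ) : ℤ)).natAbs ≤ k}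

/-- The grid graph `P_m □ P_n`: the Cartesian product of two paths. -/
def gridGraph (m n : ℕ) : SimpleGraph (Fin m × Fin n) :=
  SimpleGraph.fromRel (fun p q =>
    (p.1 = q.1 ∧ (p.2 : ℕ) + 1 = (q.2 : ℕ)) ∨ (p.2 = q.2 ∧ (p.1 : ℕ) + 1 = (q.1 : ℕ)))

open SimpleGraph Function

section Labeling

variable {V : Type*} {G : SimpleGraph V} {ψ : V → ℕ} {k : ℕ}

theorem SimpleGraph.Preconnected.exists_adj_lt_le (hG : G.Preconnected) {u v : V} (s : ℕ)
    (hu : ψ u < s) (hv : s ≤ ψ v) : ∃ x y, G.Adj x y ∧ ψ x < s ∧ s ≤ ψ y := by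
  obtain ⟨p⟩ := hG u v
  obtain ⟨d, -, hx, hy⟩ := p.exists_boundary_dart {x | ψ x < s} hu (by simpa using hv)
  exact ⟨d.fst, d.snd, d.adj, hx, by simpa using hy⟩

theorem card_le_of_injective_boundary {ι : Type*} [Fintype ι] (hψ : Injective ψ)
    (hk : ∀ u v, G.Adj u v → ψ v ≤ ψ u + k) {s : ℕ} {f : ι → V} (hf : Injective f)
    (hbd : ∀ i, s ≤ ψ (f i) ∧ ∃ u, G.Adj u (f i) ∧ ψ u < s) : Fintype.card ι ≤ k := by
  have hmaps : ∀ i ∈ (Finset.univ : Finset ι), ψ (f i) ∈ Finset.Ico s (s + k) := by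
    intro i _
    obtain ⟨hs, u, hadj, hu⟩ := hbd i
    have := hk u (f i) hadj
    exact Finset.mem_Ico.mpr ⟨hs, by omega⟩
  simpa using Finset.card_le_card_of_injOn (ψ ∘ f) hmaps (hψ.comp hf).injOn

end Labeling

section BoxProduct

variable {α β : Type*} {G : SimpleGraph α} {H : SimpleGraph β} {ψ : α × β → ℕ} {k : ℕ}

theorem exists_line_threshold [Finite α] [Finite β] [Nonempty α] [Nonempty β]
    (ψ : α × β → ℕ) : ∃ s, (∀ a, ∃ b, s ≤ ψ (a, b)) ∧ (∀ b, ∃ a, s ≤ ψ (a, b)) ∧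
      ((∃ a, ∀ b, ψ (a, b) ≤ s) ∨ (∃ b, ∀ a, ψ (a, b) ≤ s)) := by
  by_contra! h
  have hall : ∀ t, (∀ a, ∃ b, t ≤ ψ (a, b)) ∧ ∀ b, ∃ a, t ≤ ψ (a, b) := by
    intro t
    induction t with
    | zero => exact ⟨fun a => ⟨Classical.arbitrary β, Nat.zero_le _⟩,
        fun b => ⟨Classical.arbitrary α, Nat.zero_le _⟩⟩
    | succ t ih =>
      obtain ⟨hrow, hcol⟩ := h t ih.1 ih.2
      exact ⟨fun a => (hrow a).imp fun b => Nat.succ_le_of_lt,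
        fun b => (hcol b).imp fun a => Nat.succ_le_of_lt⟩
  obtain ⟨N, hN⟩ := (Set.finite_range ψ).bddAbove
  obtain ⟨b, hb⟩ := (hall (N + 1)).1 (Classical.arbitrary α)
  have := hN (Set.mem_range_self (Classical.arbitrary α, b))
  omega

theorem card_le_of_row_le [Fintype β] [Nontrivial β] (hG : G.Preconnected) (hH : H.Preconnected)
    (hψ : Injective ψ) (hk : ∀ u v, (G □ H).Adj u v → ψ v ≤ ψ u + k) {s : ℕ} {a₀ : α}
    (hrow : ∀ b, ψ (a₀, b) ≤ s) (hcol : ∀ b, ∃ a, s ≤ ψ (a, b)) : Fintype.card β ≤ k := by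
  have hbd : ∀ b, ∃ a, s ≤ ψ (a, b) ∧ ∃ u, (G □ H).Adj u (a, b) ∧ ψ u < s := by
    intro b
    rcases (hrow b).lt_or_eq with hlt | heq
    · obtain ⟨a₁, ha₁⟩ := hcol b
      obtain ⟨x, y, hxy, hx, hy⟩ :=
        hG.exists_adj_lt_le (ψ := fun a => ψ (a, b)) s hlt ha₁
      exact ⟨y, hy, (x, b), boxProd_adj_left.mpr hxy, hx⟩
    · obtain ⟨b', hbb'⟩ := hH.exists_adj_of_nontrivial b
      have hne : ψ (a₀, b') ≠ ψ (a₀, b) := fun h => hbb'.ne' (congrArg Prod.snd (hψ h))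
      exact ⟨a₀, heq.ge, (a₀, b'), boxProd_adj_right.mpr hbb'.symm,
        lt_of_le_of_ne (hrow b') (heq ▸ hne)⟩
  choose f hf using hbd
  exact card_le_of_injective_boundary hψ hk (f := fun b => (f b, b))
    (fun b b' h => congrArg Prod.snd h) hf

theorem min_card_le_of_boxProd [Fintype α] [Fintype β] [Nontrivial α] [Nontrivial β]
    (hG : G.Preconnected) (hH : H.Preconnected) (hψ : Injective ψ)
    (hk : ∀ u v, (G □ H).Adj u v → ψ v ≤ ψ u + k) :
    min (Fintype.card α) (Fintype.card β) ≤ k := by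
  obtain ⟨s, hrows, hcols, ⟨a₀, hrow⟩ | ⟨b₀, hcol⟩⟩ := exists_line_threshold ψ
  · exact min_le_of_right_le (card_le_of_row_le hG hH hψ hk hrow hcols)
  · exact min_le_of_left_le (card_le_of_row_le (ψ := ψ ∘ Prod.swap) hH hG
      (hψ.comp Prod.swap_injective) (fun u v h => hk _ _ ((boxProdComm H G).map_adj_iff.mpr h))
      hcol hrows)

end BoxProduct

theorem le_bw_of_forall_injective {G : SimpleGraph V} {c : ℕ}
    (h : ∀ (ψ : V → ℕ) (k : ℕ), Injective ψ → (∀ u v, G.Adj u v → ψ v ≤ ψ u + k) → c ≤ k) :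
    c ≤ bw G := by
  unfold bw
  have hne : {k : ℕ | ∃ φ : V ≃ Fin (Fintype.card V),
      ∀ u v, G.Adj u v → (((φ u : ℕ) : ℤ) - ((φ v : ℕ) : ℤ)).natAbs ≤ k}.Nonempty := by
    refine ⟨Fintype.card V, Fintype.equivFin V, fun u v _ => ?_⟩
    have := (Fintype.equivFin V u).isLt
    have := (Fintype.equivFin V v).isLt
    omega
  obtain ⟨φ, hφ⟩ := Nat.sInf_mem hne
  refine h (fun v => φ v) _ (Fin.val_injective.comp φ.injective) fun u v huv => ?_
  have := hφ u v huv
  omega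

theorem gridGraph_eq_boxProd (m n : ℕ) : gridGraph m n = pathGraph m □ pathGraph n := by
  ext p q
  simp only [gridGraph, fromRel_adj, boxProd_adj, pathGraph_adj, ne_eq, Prod.ext_iff,
    Fin.ext_iff]
  omega

theorem min_le_bw_gridGraph {m n : ℕ} (hm : 2 ≤ m) (hn : 2 ≤ n) :
    min m n ≤ bw (gridGraph m n) := by
  have : Nontrivial (Fin m) := Fin.nontrivial_iff_two_le.mpr hm
  have : Nontrivial (Fin n) := Fin.nontrivial_iff_two_le.mpr hn
  refine le_bw_of_forall_injective fun ψ k hψ hk => ?_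
  rw [gridGraph_eq_boxProd] at hk
  simpa using min_card_le_of_boxProd (pathGraph_preconnected m) (pathGraph_preconnected n) hψ hk

section Resolution

variable {G : SimpleGraph V} {ρ : V → Pt}

theorem finite_setOf_dist (P : V → V → Prop) (ρ : V → Pt) :
    {d | ∃ u v, P u v ∧ d = dist (ρ u) (ρ v)}.Finite :=
  (Set.finite_range fun p : V × V => dist (ρ p.1) (ρ p.2)).subset
    fun _ ⟨u, v, _, hd⟩ => ⟨(u, v), hd.symm⟩

theorem one_le_maxE_div_minP {u₀ v₀ : V} (h₀ : G.Adj u₀ v₀) (hρ : Injective ρ) :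
    1 ≤ maxE G ρ / minP ρ := by
  have hmin : minP ρ ∈ {d | ∃ u v : V, u ≠ v ∧ d = dist (ρ u) (ρ v)} :=
    Set.Nonempty.csInf_mem ⟨_, u₀, v₀, h₀.ne, rfl⟩ (finite_setOf_dist _ ρ)
  have hpos : 0 < minP ρ := by
    obtain ⟨u, v, huv, hd⟩ := hmin
    exact hd ▸ dist_pos.mpr (hρ.ne huv)
  rw [one_le_div hpos]
  calc minP ρ ≤ dist (ρ u₀) (ρ v₀) :=
        csInf_le ⟨0, fun _ ⟨_, _, _, hd⟩ => hd ▸ dist_nonneg⟩ ⟨u₀, v₀, h₀.ne, rfl⟩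
    _ ≤ maxE G ρ := le_csSup (finite_setOf_dist _ ρ).bddAbove ⟨u₀, v₀, h₀, rfl⟩

theorem re_eq_one_of_separated {u₀ v₀ : V} (h₀ : G.Adj u₀ v₀)
    (hedge : ∀ u v, G.Adj u v → dist (ρ u) (ρ v) ≤ 1)
    (hsep : ∀ u v, u ≠ v → 1 ≤ dist (ρ u) (ρ v)) : re G = 1 := by
  have hρ : Injective ρ := fun u v huv => by
    by_contra hne
    linarith [hsep u v hne, dist_le_zero.mpr huv]
  have hmaxE : maxE G ρ ≤ 1 :=
    csSup_le ⟨_, u₀, v₀, h₀, rfl⟩ fun _ ⟨u, v, huv, hd⟩ => hd ▸ hedge u v huv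
  have hminP : 1 ≤ minP ρ :=
    le_csInf ⟨_, u₀, v₀, h₀.ne, rfl⟩ fun _ ⟨u, v, huv, hd⟩ => hd ▸ hsep u v huv
  have hratio : maxE G ρ / minP ρ = 1 :=
    le_antisymm ((div_le_one (by linarith)).mpr (hmaxE.trans hminP)) (one_le_maxE_div_minP h₀ hρ)
  refine IsLeast.csInf_eq ⟨⟨ρ, hρ, hratio.symm⟩, ?_⟩
  rintro _ ⟨σ, hσ, rfl⟩
  exact one_le_maxE_div_minP h₀ hσ

end Resolution

def gridEmb (m n : ℕ) (p : Fin m × Fin n) : Pt := !₂[((p.1 : ℕ) : ℝ), ((p.2 : ℕ) : ℝ)]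

theorem dist_gridEmb {m n : ℕ} (p q : Fin m × Fin n) :
    dist (gridEmb m n p) (gridEmb m n q) =
      √(dist (p.1 : ℕ) (q.1 : ℕ) ^ 2 + dist (p.2 : ℕ) (q.2 : ℕ) ^ 2) := by
  simp [EuclideanSpace.dist_eq, Fin.sum_univ_two, gridEmb]

theorem dist_gridEmb_of_adj {m n : ℕ} {p q : Fin m × Fin n}
    (h : (pathGraph m □ pathGraph n).Adj p q) : dist (gridEmb m n p) (gridEmb m n q) = 1 := by
  have hpath : ∀ {k} {a b : Fin k}, (pathGraph k).Adj a b → dist (a : ℕ) (b : ℕ) = 1 := by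
    intro k a b hab
    rw [pathGraph_adj] at hab
    rw [Nat.dist_eq]
    rcases hab with hab | hab <;> rw [← hab] <;> simp
  rw [dist_gridEmb]
  rcases h with ⟨h, he⟩ | ⟨h, he⟩ <;> simp [he, hpath h]

theorem one_le_dist_gridEmb {m n : ℕ} {p q : Fin m × Fin n} (h : p ≠ q) :
    1 ≤ dist (gridEmb m n p) (gridEmb m n q) := by
  have hcoord : (p.1 : ℕ) ≠ q.1 ∨ (p.2 : ℕ) ≠ q.2 := by
    contrapose! h
    exact Prod.ext (Fin.ext h.1) (Fin.ext h.2)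
  have h₀ := PiLp.dist_apply_le (gridEmb m n p) (gridEmb m n q) 0
  have h₁ := PiLp.dist_apply_le (gridEmb m n p) (gridEmb m n q) 1
  simp only [gridEmb, PiLp.toLp_apply, Matrix.cons_val_zero, Matrix.cons_val_one,
    Nat.dist_cast_real] at h₀ h₁
  rcases hcoord with hne | hne
  · exact (Nat.pairwise_one_le_dist hne).trans h₀
  · exact (Nat.pairwise_one_le_dist hne).trans h₁

theorem re_gridGraph {m n : ℕ} (hm : 2 ≤ m) (hn : 1 ≤ n) : re (gridGraph m n) = 1 := by
  rw [gridGraph_eq_boxProd]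
  have h₀ : (pathGraph m □ pathGraph n).Adj (⟨0, by omega⟩, ⟨0, hn⟩) (⟨1, hm⟩, ⟨0, hn⟩) :=
    boxProd_adj_left.mpr (pathGraph_adj.mpr (Or.inl rfl))
  exact re_eq_one_of_separated h₀ (fun _ _ h => (dist_gridEmb_of_adj h).le)
    fun _ _ => one_le_dist_gridEmb

/-- `bw (P_m □ P_n) ≥ min m n` while `re (P_m □ P_n) = 1`; consequently the
resolution coefficient is not bounded below by any monotone unbounded function of
the bandwidth. -/
theorem stmt_14 :
    (∀ m n : ℕ, 2 ≤ m → 2 ≤ n →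
      min m n ≤ bw (gridGraph m n) ∧ re (gridGraph m n) = 1) ∧
    ∀ f : ℕ → ℝ, Monotone f → Filter.Tendsto f Filter.atTop Filter.atTop →
      ∃ m n : ℕ, 2 ≤ m ∧ 2 ≤ n ∧ re (gridGraph m n) < f (bw (gridGraph m n)) := by
  refine ⟨fun m n hm hn => ⟨min_le_bw_gridGraph hm hn, re_gridGraph hm (by omega)⟩, ?_⟩
  intro f hf hf_top
  obtain ⟨N, hN⟩ := Filter.eventually_atTop.mp (hf_top.eventually_ge_atTop 2)
  set n := max 2 N
  have hn : 2 ≤ n := le_max_left 2 N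
  have hbw : N ≤ bw (gridGraph n n) :=
    (le_max_right 2 N).trans (by simpa only [min_self] using min_le_bw_gridGraph hn hn)
  refine ⟨n, n, hn, hn, ?_⟩
  calc re (gridGraph n n) = 1 := re_gridGraph hn (by omega)
    _ < 2 := one_lt_two
    _ ≤ f N := hN N le_rfl
    _ ≤ f (bw (gridGraph n n)) := hf hbw
end
end

section
/- In any convex quadrilateral in the plane, the longer diagonal is at least √2 times as long as the shortest side. -/
/-!
Let the diagonals meet at `X` and put `a = XA`, `b = XB`, `c = XC`, `d = XD`. Since the shortest
side `m` is at most `BA` and `BC`, Stewart's theorem for `B` over the diagonal `AC` gives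
`m² ≤ b² + ac`; likewise `m² ≤ d² + ac`, `m² ≤ a² + bd` and `m² ≤ c² + bd`. If `ac ≤ bd`, the
first two add up to `2m² ≤ (b + d)² = BD²`; otherwise the last two give `2m² ≤ (a + c)² = AC²`.
-/

open Real

noncomputable section

variable {V : Type*} [Fintype V]

section Stewart

variable {E : Type*} [NormedAddCommGroup E] [InnerProductSpace ℝ E]

/-- Stewart's theorem, with the foot on `ac` given by its affine parameter `t`. -/
theorem dist_sq_lineMap_add (p a c : E) (t : ℝ) :
    dist p (AffineMap.lineMap a c t) ^ 2 + t * (1 - t) * dist a c ^ 2 =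
      (1 - t) * dist p a ^ 2 + t * dist p c ^ 2 := by
  have hx : p - AffineMap.lineMap a c t = (1 - t) • (p - a) + t • (p - c) := by
    rw [AffineMap.lineMap_apply_module]; module
  have hac : a - c = (p - c) - (p - a) := by abel
  simp only [dist_eq_norm, hx, hac, ← real_inner_self_eq_norm_sq, inner_add_left, inner_add_right,
    inner_sub_left, inner_sub_right, real_inner_smul_left, real_inner_smul_right]
  ring

theorem sq_le_dist_sq_add_mul_of_mem_segment {p a c x : E} {m : ℝ} (hm : 0 ≤ m)
    (ha : m ≤ dist p a) (hc : m ≤ dist p c) (hx : x ∈ segment ℝ a c) :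
    m ^ 2 ≤ dist p x ^ 2 + dist a x * dist x c := by
  rw [segment_eq_image_lineMap] at hx
  obtain ⟨t, ⟨ht0, ht1⟩, rfl⟩ := hx
  have hmul : dist a (AffineMap.lineMap a c t) * dist (AffineMap.lineMap a c t) c =
      t * (1 - t) * dist a c ^ 2 := by
    rw [dist_left_lineMap, dist_lineMap_right, Real.norm_of_nonneg ht0,
      Real.norm_of_nonneg (sub_nonneg.2 ht1)]
    ring
  rw [hmul, dist_sq_lineMap_add]
  have ha2 := pow_le_pow_left₀ hm ha 2
  have hc2 := pow_le_pow_left₀ hm hc 2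
  nlinarith

end Stewart

theorem sqrt_two_mul_le_max_add {a b c d m : ℝ} (ha : 0 ≤ a) (hb : 0 ≤ b) (hc : 0 ≤ c) (hd : 0 ≤ d)
    (hA : m ^ 2 ≤ a ^ 2 + b * d) (hB : m ^ 2 ≤ b ^ 2 + a * c)
    (hC : m ^ 2 ≤ c ^ 2 + b * d) (hD : m ^ 2 ≤ d ^ 2 + a * c) :
    √2 * m ≤ max (a + c) (b + d) := by
  have hsq : (√2 * m) ^ 2 ≤ max (a + c) (b + d) ^ 2 := by
    rw [mul_pow, Real.sq_sqrt zero_le_two]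
    rcases le_total (a * c) (b * d) with h | h
    · calc 2 * m ^ 2 ≤ (b + d) ^ 2 := by nlinarith
        _ ≤ _ := pow_le_pow_left₀ (by positivity) (le_max_right _ _) 2
    · calc 2 * m ^ 2 ≤ (a + c) ^ 2 := by nlinarith
        _ ≤ _ := pow_le_pow_left₀ (by positivity) (le_max_left _ _) 2
  exact (le_abs_self _).trans (abs_le_of_sq_le_sq hsq (by positivity))

/-- In a convex quadrilateral `ABCD` (the diagonals `AC` and `BD` cross), the longer
diagonal is at least `√2` times the shortest side. -/
theorem stmt_15 (A B C D : Pt)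
    (h : ∃ x, x ∈ openSegment ℝ A C ∧ x ∈ openSegment ℝ B D) :
    Real.sqrt 2 * min (min (dist A B) (dist B C)) (min (dist C D) (dist D A)) ≤
      max (dist A C) (dist B D) := by
  obtain ⟨x, hAC, hBD⟩ := h
  replace hAC := openSegment_subset_segment ℝ A C hAC
  replace hBD := openSegment_subset_segment ℝ B D hBD
  set m := min (min (dist A B) (dist B C)) (min (dist C D) (dist D A))
  have hm : 0 ≤ m := by positivity
  have hAB : m ≤ dist A B := (min_le_left _ _).trans (min_le_left _ _)
  have hBC : m ≤ dist B C := (min_le_left _ _).trans (min_le_right _ _)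
  have hCD : m ≤ dist C D := (min_le_right _ _).trans (min_le_left _ _)
  have hDA : m ≤ dist D A := (min_le_right _ _).trans (min_le_right _ _)
  have hA := sq_le_dist_sq_add_mul_of_mem_segment hm hAB (dist_comm D A ▸ hDA) hBD
  have hB := sq_le_dist_sq_add_mul_of_mem_segment hm (dist_comm A B ▸ hAB) hBC hAC
  have hC := sq_le_dist_sq_add_mul_of_mem_segment hm (dist_comm B C ▸ hBC) hCD hBD
  have hD := sq_le_dist_sq_add_mul_of_mem_segment hm hDA (dist_comm C D ▸ hCD) hAC
  rw [dist_comm C x] at hC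
  rw [dist_comm D x] at hD
  rw [← dist_add_dist_of_mem_segment hAC, ← dist_add_dist_of_mem_segment hBD]
  exact sqrt_two_mul_le_max_add dist_nonneg dist_nonneg dist_nonneg dist_nonneg hA hB hC hD
end
end
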